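/- arXiv:2511.07207 — 7 statements merged into one kernel-verified Lean document; each statement's English description precedes it below -/
import Mathlib

section
/- The number of binary spin configurations of length N with periodic boundary conditions, total magnetization M (with N and M of the same parity, |M| < N), and exactly 2S defects (adjacent opposite-spin pairs), equals binom((N+M)/2 - 1, S-1)*binom((N-M)/2, S) + binom((N-M)/2 - 1, S-1)*binom((N+M)/2, S). -/
/-!
Cut the cycle open between its last and first site. A word that starts with `true`, ends with
`e`, has `p` letters `true`, `q` letters `false` and `2j` cyclic defects is a sequence of
alternating runs: `j + 1` runs of `true` and `j` of `false` if `e = true`, `j` of each if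
`e = false`. So there are `c(p, j + 1) c(q, j)`, respectively `c(p, j) c(q, j)`, such words, where
`c(m, k)` counts compositions of `m` into `k` positive parts; these closed forms satisfy the
recursion obtained by deleting the last letter, which is how they are proved. Summing over `e`
with Pascal's rule `c(p, j + 1) + c(p, j) = c(p + 1, j + 1) = C(p, j)` leaves `C(p, j) c(q, j)`
words that start with `true`; flipping every spin exchanges `p` and `q` and counts the words that
start with `false`.
-/

def intChoose (n k : ℤ) : ℕ :=
  if 0 ≤ n ∧ 0 ≤ k then n.toNat.choose k.toNat else 0

open Finset

def compositionCount : ℕ → ℕ → ℕ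
  | 0, 0 => 1
  | 0, _ + 1 => 0
  | _ + 1, 0 => 0
  | m + 1, k + 1 => m.choose k

theorem compositionCount_succ_succ (m k : ℕ) :
    compositionCount (m + 1) (k + 1) = compositionCount m (k + 1) + compositionCount m k := by
  rcases m with _ | m <;> rcases k with _ | k <;>
    simp [compositionCount, Nat.choose_succ_succ, add_comm]

theorem compositionCount_eq_intChoose {m : ℕ} (k : ℕ) (hm : 0 < m) :
    compositionCount m k = intChoose (m - 1) (k - 1) := by
  obtain ⟨m, rfl⟩ := Nat.exists_eq_add_of_lt hm
  rcases k with _ | k <;> simp [compositionCount, intChoose]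

theorem intChoose_natCast (m k : ℕ) : intChoose m k = m.choose k := by
  simp [intChoose]

theorem card_filter_snoc {α : Type*} [Fintype α] {n : ℕ} (P : (Fin (n + 1) → α) → Prop)
    [DecidablePred P] : #{w | P w} = ∑ a, #{v : Fin n → α | P (Fin.snoc v a)} := by
  simp only [card_filter]
  rw [← (Fin.snocEquiv fun _ => α).sum_comp, Fintype.sum_prod_type]
  rfl

theorem card_filter_comp_not {ι : Type*} [Fintype ι] [DecidableEq ι] (P : (ι → Bool) → Prop)
    [DecidablePred P] : #{w | P w} = #{w : ι → Bool | P (fun i => !w i)} :=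
  card_equiv ((Equiv.refl ι).arrowCongr Equiv.boolNot) (by simp)

theorem sum_spin_flip {ι : Type*} [Fintype ι] (w : ι → Bool) :
    ∑ i, (if w i = false then (1 : ℤ) else -1) = -∑ i, (if w i then (1 : ℤ) else -1) := by
  rw [← sum_neg_distrib]
  exact sum_congr rfl fun i _ => by cases w i <;> rfl

section Words

variable {n : ℕ}

def trueCount (w : Fin n → Bool) : ℕ := #{i | w i}

def changeCount (w : Fin (n + 1) → Bool) : ℕ := #{i : Fin n | w i.castSucc ≠ w i.succ}

theorem trueCount_le (w : Fin n → Bool) : trueCount w ≤ n :=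
  (card_filter_le _ _).trans_eq (card_fin n)

theorem trueCount_snoc (v : Fin n → Bool) (a : Bool) :
    trueCount (Fin.snoc v a : Fin (n + 1) → Bool) = trueCount v + a.toNat := by
  simp only [trueCount, card_filter, Fin.sum_univ_castSucc, Fin.snoc_castSucc, Fin.snoc_last]
  cases a <;> rfl

theorem changeCount_snoc (v : Fin (n + 1) → Bool) (a : Bool) :
    changeCount (Fin.snoc v a : Fin (n + 2) → Bool) =
      changeCount v + (v (Fin.last n) != a).toNat := by
  simp only [changeCount, card_filter, Fin.sum_univ_castSucc, Fin.succ_castSucc,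
    Fin.snoc_castSucc, Fin.succ_last, Fin.snoc_last]
  cases v (Fin.last n) <;> cases a <;> rfl

theorem card_filter_ne_add_one (w : Fin (n + 1) → Bool) :
    #{i | w i ≠ w (i + 1)} = changeCount w + (w (Fin.last n) != w 0).toNat := by
  simp only [card_filter, Fin.sum_univ_castSucc, changeCount, Fin.coeSucc_eq_succ,
    Fin.last_add_one]
  cases w (Fin.last n) <;> cases w 0 <;> rfl

theorem sum_spin_eq_two_mul_trueCount_sub (w : Fin n → Bool) :
    ∑ i, (if w i then (1 : ℤ) else -1) = 2 * trueCount w - n := by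
  have hspin (b : Bool) : (if b then (1 : ℤ) else -1) = 2 * (if b then 1 else 0) - 1 := by
    cases b <;> rfl
  simp only [hspin, sum_sub_distrib, ← mul_sum, sum_boole, sum_const, card_univ, Fintype.card_fin,
    trueCount, nsmul_eq_mul, mul_one]

end Words

-- Since `w 0 = true`, `changeCount w + (!e).toNat` is the number of defects of `w` read cyclically.
def wordCount (n p j : ℕ) (e : Bool) : ℕ :=
  #{w : Fin (n + 1) → Bool | w 0 = true ∧ w (Fin.last n) = e ∧ trueCount w = p ∧
    changeCount w + (!e).toNat = 2 * j}

theorem wordCount_zero (p j : ℕ) (e : Bool) :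
    wordCount 0 p j e = if e = true ∧ p = 1 ∧ j = 0 then 1 else 0 := by
  by_cases hp : p = 1 <;> by_cases hj : j = 0 <;> cases e <;>
    simp [wordCount, card_filter_snoc, changeCount, trueCount, Fin.snoc, hp, hj, eq_comm (a := 1)]

theorem wordCount_eq_zero_of_lt {n p : ℕ} (j : ℕ) (e : Bool) (hp : n + 1 < p) :
    wordCount n p j e = 0 := by
  simp only [wordCount, card_eq_zero, filter_eq_empty_iff]
  intro w _ ⟨_, _, hw, _⟩
  have := trueCount_le w
  omega

theorem wordCount_succ (n p j : ℕ) (e : Bool) :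
    wordCount (n + 1) p j e =
      #{v : Fin (n + 1) → Bool | v 0 = true ∧ trueCount v + e.toNat = p ∧
        changeCount v + (v (Fin.last n) != e).toNat + (!e).toNat = 2 * j} := by
  have hhead (v : Fin (n + 1) → Bool) (a : Bool) :
      (Fin.snoc v a : Fin (n + 2) → Bool) 0 = v 0 := by
    rw [← Fin.castSucc_zero, Fin.snoc_castSucc]
  rw [wordCount, card_filter_snoc, Fintype.sum_bool]
  cases e <;> simp [trueCount_snoc, changeCount_snoc, hhead]

theorem wordCount_succ_succ_true (n p j : ℕ) :
    wordCount (n + 1) (p + 1) j true = wordCount n p j true + wordCount n p j false := by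
  rw [wordCount_succ, ← card_filter_add_card_filter_not (p := fun v => v (Fin.last n) = true)]
  simp only [wordCount, filter_filter, Bool.not_eq_true]
  congr 2 <;> ext v <;> cases h : v (Fin.last n) <;> simp [h]

theorem wordCount_succ_false_succ (n p j : ℕ) :
    wordCount (n + 1) p (j + 1) false = wordCount n p (j + 1) false + wordCount n p j true := by
  rw [wordCount_succ, ← card_filter_add_card_filter_not (p := fun v => v (Fin.last n) = false)]
  simp only [wordCount, filter_filter, Bool.not_eq_false]
  congr 2 <;> ext v <;> cases h : v (Fin.last n) <;> simp [h, mul_add]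

theorem wordCount_eq (n : ℕ) : ∀ p q j, p + q = n + 1 →
    wordCount n p j true = compositionCount p (j + 1) * compositionCount q j ∧
    wordCount n p j false = compositionCount p j * compositionCount q j := by
  induction n with
  | zero =>
    intro p q j h
    obtain ⟨rfl, rfl⟩ | ⟨rfl, rfl⟩ : p = 0 ∧ q = 1 ∨ p = 1 ∧ q = 0 := by omega
    all_goals rcases j with _ | j <;> simp [wordCount_zero, compositionCount]
  | succ n ih =>
    intro p q j h
    constructor
    · rcases p with _ | p
      · simp [wordCount_succ, compositionCount]
      · obtain ⟨ih_true, ih_false⟩ := ih p q j (by omega)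
        rw [wordCount_succ_succ_true, ih_true, ih_false, compositionCount_succ_succ]
        ring
    · rcases j with _ | j
      · rcases p with _ | p <;> rcases q with _ | q <;> simp [wordCount, compositionCount] at h ⊢
      rcases q with _ | q
      · rw [wordCount_succ_false_succ, wordCount_eq_zero_of_lt _ _ (by omega),
          wordCount_eq_zero_of_lt _ _ (by omega)]
        simp [compositionCount]
      · rw [wordCount_succ_false_succ, (ih p q (j + 1) (by omega)).2, (ih p q j (by omega)).1,
          compositionCount_succ_succ q]
        ring

theorem card_defects_head_true (n p q S : ℕ) (h : p + q = n + 1) :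
    #{w : Fin (n + 1) → Bool | w 0 = true ∧ trueCount w = p ∧
        #{i | w i ≠ w (i + 1)} = 2 * S} = p.choose S * compositionCount q S := by
  rw [← card_filter_add_card_filter_not (p := fun w => w (Fin.last n) = true)]
  simp only [filter_filter, Bool.not_eq_true, card_filter_ne_add_one]
  obtain ⟨hT, hF⟩ := wordCount_eq n p q S h
  rw [show p.choose S = compositionCount (p + 1) (S + 1) from rfl, compositionCount_succ_succ,
    add_mul, ← hT, ← hF, wordCount, wordCount]
  congr 2 <;> ext w <;> simp only [mem_filter, mem_univ, true_and] <;> grind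

theorem card_magnetization_defects_head_true (n p q S : ℕ) (h : p + q = n + 1) :
    #{w : Fin (n + 1) → Bool | w 0 = true ∧ ∑ i, (if w i then (1 : ℤ) else -1) = p - q ∧
        #{i | w i ≠ w (i + 1)} = 2 * S} = p.choose S * compositionCount q S := by
  rw [← card_defects_head_true n p q S h]
  congr 2
  ext w
  rw [sum_spin_eq_two_mul_trueCount_sub]
  exact and_congr_right' (and_congr_left' (by omega))

theorem card_magnetization_defects (n p q S : ℕ) (h : p + q = n + 1) :
    #{w : Fin (n + 1) → Bool | ∑ i, (if w i then (1 : ℤ) else -1) = p - q ∧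
        #{i | w i ≠ w (i + 1)} = 2 * S} =
      q.choose S * compositionCount p S + p.choose S * compositionCount q S := by
  rw [← card_filter_add_card_filter_not (p := fun w => w 0 = false), filter_filter, filter_filter,
    card_filter_comp_not, ← card_magnetization_defects_head_true n q p S (by omega),
    ← card_magnetization_defects_head_true n p q S h]
  congr 2 <;> ext w <;>
    simp only [mem_filter, mem_univ, true_and, ne_eq, Bool.not_eq_eq_eq_not, Bool.not_true,
      Bool.not_not, Bool.not_eq_false, sum_spin_flip] <;> grind

/-- The number of cyclic spin configurations of length `N` with total magnetization `M`
(same parity as `N`, `|M| < N`) and exactly `2S` defects. -/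
theorem stmt0 (N : ℕ) [NeZero N] (M : ℤ) (S : ℕ)
    (hpar : (N : ℤ) % 2 = M % 2) (hM : |M| < N) :
    (Finset.univ.filter (fun s : ZMod N → Bool =>
        (∑ i, (if s i then (1 : ℤ) else -1)) = M ∧
        (Finset.univ.filter (fun i => s i ≠ s (i + 1))).card = 2 * S)).card
      = intChoose (((N : ℤ) + M) / 2 - 1) ((S : ℤ) - 1) * intChoose (((N : ℤ) - M) / 2) (S : ℤ)
        + intChoose (((N : ℤ) - M) / 2 - 1) ((S : ℤ) - 1) * intChoose (((N : ℤ) + M) / 2) (S : ℤ) := by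
  obtain ⟨n, rfl⟩ : ∃ n, N = n + 1 := Nat.exists_eq_succ_of_ne_zero (NeZero.ne N)
  rw [abs_lt] at hM
  obtain ⟨p, q, hpq, hp, hq, rfl⟩ : ∃ p q : ℕ, p + q = n + 1 ∧ 0 < p ∧ 0 < q ∧ M = p - q :=
    ⟨((n + 1 + M) / 2).toNat, ((n + 1 - M) / 2).toNat, by omega, by omega, by omega, by omega⟩
  have hplus : (((n + 1 : ℕ) : ℤ) + (p - q)) / 2 = p := by omega
  have hminus : (((n + 1 : ℕ) : ℤ) - (p - q)) / 2 = q := by omega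
  rw [hplus, hminus, ← compositionCount_eq_intChoose S hp, ← compositionCount_eq_intChoose S hq,
    intChoose_natCast, intChoose_natCast, mul_comm (compositionCount p S),
    mul_comm (compositionCount q S)]
  exact card_magnetization_defects n p q S hpq
end

section
/- For a fixed m with |m| < 1, the function κ ↦ f₁(m,s,κ) = -(s-κ)log(s-κ) - (1-m-s)log(1-m-s) + (1-m)log(1-m) + (1+m-s)log(1+m-s) - 2κ log κ - (1+m-s-κ)log(1+m-s-κ), defined for 0 < κ < s < 1-|m|, attains its maximum (with respect to κ, for fixed m and s) at κ* = s(1 - s/(1+m)). -/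
/-- For fixed `m`, `s`, the entropy-like function `f₁(m,s,·)` is strictly concave in `κ`
and its derivative vanishes at `κ* = s (1 - s/(1+m))`, where it attains its maximum. -/
theorem stmt7 (m s : ℝ) (hm : |m| < 1) (hs : 0 < s) (hs' : s < 1 - |m|) :
    let f : ℝ → ℝ := fun κ =>
      -(s - κ) * Real.log (s - κ) - (1 - m - s) * Real.log (1 - m - s)
        + (1 - m) * Real.log (1 - m) + (1 + m - s) * Real.log (1 + m - s)
        - 2 * κ * Real.log κ - (1 + m - s - κ) * Real.log (1 + m - s - κ)
    deriv f (s * (1 - s / (1 + m))) = 0 ∧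
      StrictConcaveOn ℝ (Set.Ioo 0 (min s (1 + m - s))) f := by
  intro f
  obtain ⟨hm1, hm2⟩ := abs_lt.mp hm
  have h1m : (0:ℝ) < 1 + m := by linarith
  have hsm : s < 1 + m := by linarith [neg_abs_le m]
  have hb : 0 < 1 + m - s := by linarith
  -- the function f equals a nicer form F
  have hfF : f = fun κ => -((s - κ) * Real.log (s - κ))
      + (-(1 - m - s) * Real.log (1 - m - s) + (1 - m) * Real.log (1 - m)
        + (1 + m - s) * Real.log (1 + m - s))
      - 2 * (κ * Real.log κ) - (1 + m - s - κ) * Real.log (1 + m - s - κ) := by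
    funext κ; simp only [f]; ring
  -- derivative of f
  have hfd : ∀ x : ℝ, 0 < x → x < s → x < 1 + m - s →
      HasDerivAt f (Real.log (s - x) + Real.log (1 + m - s - x) - 2 * Real.log x) x := by
    intro x hx0 hxs hxb
    have hsx : (0:ℝ) < s - x := by linarith
    have hbx : (0:ℝ) < 1 + m - s - x := by linarith
    have h1 : HasDerivAt (fun κ : ℝ => s - κ) (-1) x := (hasDerivAt_id x).const_sub s
    have h2 : HasDerivAt (fun κ : ℝ => 1 + m - s - κ) (-1) x :=
      (hasDerivAt_id x).const_sub (1 + m - s)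
    have hA := (Real.hasDerivAt_mul_log hsx.ne').comp x h1
    have hB := (Real.hasDerivAt_mul_log hx0.ne').const_mul (2:ℝ)
    have hC := (Real.hasDerivAt_mul_log hbx.ne').comp x h2
    have H := (((hA.neg.add (hasDerivAt_const x
        (-(1 - m - s) * Real.log (1 - m - s) + (1 - m) * Real.log (1 - m)
          + (1 + m - s) * Real.log (1 + m - s)))).sub hB).sub hC)
    rw [hfF]
    refine H.congr_deriv ?_
    ring
  constructor
  · -- derivative vanishes at κ*
    set κ := s * (1 - s / (1 + m)) with hκdef
    have hκ : κ = s * (1 + m - s) / (1 + m) := by rw [hκdef]; field_simp; try ring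
    have hκ0 : 0 < κ := by rw [hκ]; positivity
    have hsk : s - κ = s ^ 2 / (1 + m) := by rw [hκ]; field_simp; try ring
    have hbk : 1 + m - s - κ = (1 + m - s) ^ 2 / (1 + m) := by rw [hκ]; field_simp; try ring
    have hsk0 : 0 < s - κ := by rw [hsk]; positivity
    have hbk0 : 0 < 1 + m - s - κ := by rw [hbk]; positivity
    have hD := hfd κ hκ0 (by linarith) (by linarith)
    rw [hD.deriv]
    have hprod : (s - κ) * (1 + m - s - κ) = κ ^ 2 := by
      rw [hκ]; field_simp; try ring
    rw [← Real.log_mul hsk0.ne' hbk0.ne', hprod, Real.log_pow]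
    push_cast
    ring
  · -- strict concavity
    apply strictConcaveOn_of_deriv2_neg (convex_Ioo _ _)
    · intro x hx
      obtain ⟨hx0, hx2⟩ := hx
      exact (hfd x hx0 (lt_of_lt_of_le hx2 (min_le_left _ _))
        (lt_of_lt_of_le hx2 (min_le_right _ _))).continuousAt.continuousWithinAt
    · intro x hx
      rw [interior_Ioo] at hx
      obtain ⟨hx0, hx2⟩ := hx
      have hxs : x < s := lt_of_lt_of_le hx2 (min_le_left _ _)
      have hxb : x < 1 + m - s := lt_of_lt_of_le hx2 (min_le_right _ _)
      have hsx : (0:ℝ) < s - x := by linarith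
      have hbx : (0:ℝ) < 1 + m - s - x := by linarith
      have hEq : deriv f =ᶠ[nhds x]
          fun y => Real.log (s - y) + Real.log (1 + m - s - y) - 2 * Real.log y := by
        filter_upwards [isOpen_Ioo.mem_nhds (⟨hx0, hx2⟩ : x ∈ Set.Ioo 0 (min s (1 + m - s)))]
          with y hy
        exact (hfd y hy.1 (lt_of_lt_of_le hy.2 (min_le_left _ _))
          (lt_of_lt_of_le hy.2 (min_le_right _ _))).deriv
      have h1 : HasDerivAt (fun κ : ℝ => s - κ) (-1) x := (hasDerivAt_id x).const_sub s
      have h2 : HasDerivAt (fun κ : ℝ => 1 + m - s - κ) (-1) x :=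
        (hasDerivAt_id x).const_sub (1 + m - s)
      have hg1 := (Real.hasDerivAt_log hsx.ne').comp x h1
      have hg2 := (Real.hasDerivAt_log hbx.ne').comp x h2
      have hg3 := (Real.hasDerivAt_log hx0.ne').const_mul (2:ℝ)
      have hg : HasDerivAt (fun y => Real.log (s - y) + Real.log (1 + m - s - y)
          - 2 * Real.log y) (-(s - x)⁻¹ - (1 + m - s - x)⁻¹ - 2 * x⁻¹) x := by
        refine ((hg1.add hg2).sub hg3).congr_deriv ?_
        ring
      have : deriv^[2] f x = -(s - x)⁻¹ - (1 + m - s - x)⁻¹ - 2 * x⁻¹ := by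
        show deriv (deriv f) x = _
        rw [hEq.deriv_eq, hg.deriv]
      rw [this]
      have i1 : 0 < (s - x)⁻¹ := by positivity
      have i2 : 0 < (1 + m - s - x)⁻¹ := by positivity
      have i3 : 0 < x⁻¹ := by positivity
      linarith
end

section
/- If m* ∈ (-1,1) and J is real with e^{4J/T} ≠ 1, then s* = (1 - sqrt(m*² + e^{4J/T}(1 - m*²))) / (1 - e^{4J/T}) satisfies 0 < s* ≤ 1 - |m*|, and as J → -∞ with m* = 0 one has s* → 1. -/
open Filter

lemma aux9 (m : ℝ) (hm : m ∈ Set.Ioo (-1 : ℝ) 1) (x : ℝ) (hx : 0 < x) (hx1 : x ≠ 1) :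
    0 < (1 - Real.sqrt (m ^ 2 + x * (1 - m ^ 2))) / (1 - x) ∧
    (1 - Real.sqrt (m ^ 2 + x * (1 - m ^ 2))) / (1 - x) ≤ 1 - |m| := by
  obtain ⟨hm1, hm2⟩ := hm
  have hm2' : m ^ 2 < 1 := by nlinarith
  have habs : |m| < 1 := abs_lt.mpr ⟨hm1, hm2⟩
  have habs0 : 0 ≤ |m| := abs_nonneg m
  have hsqm : |m| ^ 2 = m ^ 2 := sq_abs m
  have hD : 0 ≤ m ^ 2 + x * (1 - m ^ 2) := by nlinarith
  have hs0 : 0 ≤ Real.sqrt (m ^ 2 + x * (1 - m ^ 2)) := Real.sqrt_nonneg _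
  have hs2 : (Real.sqrt (m ^ 2 + x * (1 - m ^ 2))) ^ 2 = m ^ 2 + x * (1 - m ^ 2) :=
    Real.sq_sqrt hD
  set s := Real.sqrt (m ^ 2 + x * (1 - m ^ 2)) with hs
  rcases lt_or_gt_of_ne hx1 with h | h
  · -- x < 1
    have hden : 0 < 1 - x := by linarith
    have hslt : s < 1 := by
      have h2 : Real.sqrt (m ^ 2 + x * (1 - m ^ 2)) < Real.sqrt 1 :=
        Real.sqrt_lt_sqrt hD (by nlinarith)
      simpa [Real.sqrt_one] using h2
    constructor
    · exact div_pos (by linarith) hden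
    · rw [div_le_iff₀ hden]
      have hle : |m| + x * (1 - |m|) ≤ s := by
        rw [hs]
        apply Real.le_sqrt' (by nlinarith) |>.mpr
        nlinarith [mul_nonneg (mul_nonneg hx.le hden.le) (sq_nonneg (1 - |m|))]
      nlinarith
  · -- x > 1
    have hden : 1 - x < 0 := by linarith
    have hslt : 1 < s := by
      have h2 : Real.sqrt 1 < Real.sqrt (m ^ 2 + x * (1 - m ^ 2)) :=
        Real.sqrt_lt_sqrt (by norm_num) (by nlinarith)
      simpa [Real.sqrt_one] using h2
    constructor
    · exact div_pos_of_neg_of_neg (by linarith) hden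
    · rw [div_le_iff_of_neg hden]
      have hle : s ≤ |m| + x * (1 - |m|) := by
        rw [hs, show |m| + x * (1 - |m|) = Real.sqrt ((|m| + x * (1 - |m|)) ^ 2) by
          rw [Real.sqrt_sq (by nlinarith)]]
        apply Real.sqrt_le_sqrt
        nlinarith [mul_nonneg (mul_nonneg hx.le (by linarith : (0:ℝ) ≤ x - 1)) (sq_nonneg (1 - |m|))]
      nlinarith

/-- The equilibrium fraction of defects satisfies `0 < s* ≤ 1 - |m*|`, and as
`J → -∞` with `m* = 0` one has `s* → 1`. -/
theorem stmt9 (T : ℝ) (hT : 0 < T) (m : ℝ) (hm : m ∈ Set.Ioo (-1 : ℝ) 1) :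
    (∀ J : ℝ, Real.exp (4 * J / T) ≠ 1 →
      0 < (1 - Real.sqrt (m ^ 2 + Real.exp (4 * J / T) * (1 - m ^ 2)))
            / (1 - Real.exp (4 * J / T)) ∧
      (1 - Real.sqrt (m ^ 2 + Real.exp (4 * J / T) * (1 - m ^ 2)))
            / (1 - Real.exp (4 * J / T)) ≤ 1 - |m|) ∧
    Tendsto (fun J : ℝ =>
        (1 - Real.sqrt ((0 : ℝ) ^ 2 + Real.exp (4 * J / T) * (1 - (0 : ℝ) ^ 2)))
          / (1 - Real.exp (4 * J / T)))
      atBot (nhds 1) := by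
  constructor
  · intro J hJ
    exact aux9 m hm _ (Real.exp_pos _) hJ
  · -- limit part
    have hx0 : Tendsto (fun J : ℝ => Real.exp (4 * J / T)) atBot (nhds 0) := by
      apply Real.tendsto_exp_atBot.comp
      apply Tendsto.atBot_div_const hT
      exact (tendsto_const_mul_atBot_of_pos (by norm_num : (0:ℝ) < 4)).mpr tendsto_id
    have hsx : Tendsto (fun J : ℝ => Real.sqrt (Real.exp (4 * J / T))) atBot (nhds 0) := by
      have := (Real.continuous_sqrt.tendsto 0).comp hx0
      simpa [Function.comp_def] using this
    have hmain : Tendsto (fun J : ℝ => (1 + Real.sqrt (Real.exp (4 * J / T)))⁻¹)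
        atBot (nhds 1) := by
      have h1 : Tendsto (fun J : ℝ => 1 + Real.sqrt (Real.exp (4 * J / T))) atBot (nhds 1) := by
        simpa using (tendsto_const_nhds : Tendsto (fun _ : ℝ => (1:ℝ)) atBot (nhds 1)).add hsx
      simpa using h1.inv₀ (by norm_num)
    apply hmain.congr'
    filter_upwards [eventually_lt_atBot (0 : ℝ)] with J hJ
    have hxlt : Real.exp (4 * J / T) < 1 := by
      rw [Real.exp_lt_one_iff]
      have : 4 * J < 0 := by linarith
      exact div_neg_of_neg_of_pos this hT
    set x := Real.exp (4 * J / T) with hxdef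
    have hx : 0 < x := Real.exp_pos _
    have hsx1 : Real.sqrt x < 1 := by
      rw [show (1:ℝ) = Real.sqrt 1 by rw [Real.sqrt_one]]
      exact Real.sqrt_lt_sqrt hx.le hxlt
    have hne : 1 - Real.sqrt x ≠ 0 := by linarith
    have hfac : 1 - x = (1 - Real.sqrt x) * (1 + Real.sqrt x) := by
      have := Real.sq_sqrt hx.le
      nlinarith
    rw [show (0:ℝ) ^ 2 + x * (1 - (0:ℝ) ^ 2) = x by ring, hfac,
      div_mul_eq_div_div, div_self hne, one_div]
end

section
/- The function F(m) = (K/2)m² - J - (1/β) log[cosh(β K m) + sqrt(sinh²(βKm) + e^{-4βJ})] admits around m = 0 the Taylor expansion F(m) = -(1/β)log(2 cosh(βJ)) + (K/2)(1 - βK e^{2βJ}) m² + O(m⁴). -/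
open Asymptotics Filter Topology

private lemma bigO_of_iteratedDeriv_zero :
    ∀ (n : ℕ) (f : ℝ → ℝ), ContDiff ℝ (⊤ : ℕ∞) f → (∀ k < n, iteratedDeriv k f 0 = 0) →
      f =O[nhds 0] fun x : ℝ => x ^ n := by
  intro n
  induction n with
  | zero =>
    intro f hf _
    refine isBigO_iff.2 ⟨‖f 0‖ + 1, ?_⟩
    have h1 : ∀ᶠ x : ℝ in nhds 0, ‖f x‖ < ‖f 0‖ + 1 :=
      ((hf.continuous.tendsto 0).norm).eventually_lt_const (by linarith [norm_nonneg (f 0)])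
    filter_upwards [h1] with x hx
    simpa using hx.le
  | succ n ih =>
    intro f hf hd
    have hdiff : Differentiable ℝ f := hf.differentiable (by simp)
    have hdf : ContDiff ℝ (⊤ : ℕ∞) (deriv f) := (contDiff_infty_iff_deriv.mp hf).2
    have h0 : f 0 = 0 := by simpa using hd 0 (Nat.succ_pos n)
    have hder : ∀ k < n, iteratedDeriv k (deriv f) 0 = 0 := by
      intro k hk
      have := hd (k + 1) (by omega)
      rwa [iteratedDeriv_succ'] at this
    obtain ⟨C, hC⟩ := isBigO_iff.mp (ih (deriv f) hdf hder)
    rw [Metric.eventually_nhds_iff] at hC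
    obtain ⟨δ, hδ, hball⟩ := hC
    refine isBigO_iff.2 ⟨max C 0, ?_⟩
    rw [Metric.eventually_nhds_iff]
    refine ⟨δ, hδ, fun {x} hx => ?_⟩
    have key : ‖f x - f 0‖ ≤ (max C 0 * |x| ^ n) * ‖x - 0‖ := by
      refine (convex_closedBall (0:ℝ) |x|).norm_image_sub_le_of_norm_hasDerivWithin_le
        (f' := deriv f) (fun y _ => (hdiff y).hasDerivAt.hasDerivWithinAt)
        (fun y hy => ?_) ?_ ?_
      · simp only [Metric.mem_closedBall, Real.dist_eq, sub_zero] at hy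
        have hyδ : dist y 0 < δ := by
          rw [Real.dist_eq, sub_zero]
          calc |y| ≤ |x| := hy
            _ < δ := by simpa [Real.dist_eq] using hx
        have hb := hball hyδ
        have h1 : ‖y ^ n‖ = |y| ^ n := by
          rw [Real.norm_eq_abs, abs_pow]
        calc ‖deriv f y‖ ≤ C * ‖y ^ n‖ := hb
          _ ≤ max C 0 * |y| ^ n := by
              rw [h1]
              exact mul_le_mul_of_nonneg_right (le_max_left _ _) (by positivity)
          _ ≤ max C 0 * |x| ^ n :=
              mul_le_mul_of_nonneg_left (pow_le_pow_left₀ (abs_nonneg y) hy n)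
                (le_max_right _ _)
      · simp [Metric.mem_closedBall]
      · simp [Metric.mem_closedBall, Real.dist_eq]
    rw [h0, sub_zero] at key
    calc ‖f x‖ ≤ (max C 0 * |x| ^ n) * ‖x - 0‖ := key
      _ = max C 0 * ‖x ^ (n + 1)‖ := by
          rw [sub_zero, Real.norm_eq_abs, Real.norm_eq_abs, abs_pow, pow_succ]
          ring
      _ ≤ max C 0 * ‖x ^ (n + 1)‖ := le_refl _


private noncomputable def NKg (β J K m : ℝ) : ℝ :=
  Real.cosh (β * K * m) + Real.sqrt (Real.sinh (β * K * m) ^ 2 + Real.exp (-(4 * β * J)))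

private noncomputable def NKh (β J K m : ℝ) : ℝ :=
  (K / 2 * m ^ 2 - J - (1 / β) * Real.log (NKg β J K m))
    - (-(1 / β) * Real.log (2 * Real.cosh (β * J))
        + K / 2 * (1 - β * K * Real.exp (2 * β * J)) * m ^ 2)

private noncomputable def NKh1 (β J K m : ℝ) : ℝ :=
  K * m
    - 1 / β * ((β * K * Real.sinh (β * K * m)
        * (1 + Real.cosh (β * K * m)
            / Real.sqrt (Real.sinh (β * K * m) ^ 2 + Real.exp (-(4 * β * J)))))
        / NKg β J K m)
    - 2 * (K / 2 * (1 - β * K * Real.exp (2 * β * J))) * m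

private lemma NKq_pos (β J K m : ℝ) :
    0 < Real.sinh (β * K * m) ^ 2 + Real.exp (-(4 * β * J)) := by positivity

private lemma NKr_pos (β J K m : ℝ) :
    0 < Real.sqrt (Real.sinh (β * K * m) ^ 2 + Real.exp (-(4 * β * J))) :=
  Real.sqrt_pos.mpr (NKq_pos β J K m)

private lemma NKg_pos (β J K m : ℝ) : 0 < NKg β J K m :=
  add_pos (Real.cosh_pos _) (NKr_pos β J K m)

private lemma NKinner (β K m : ℝ) : HasDerivAt (fun x : ℝ => β * K * x) (β * K) m := by
  simpa using (hasDerivAt_id m).const_mul (β * K)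

private lemma NKg_hasDeriv (β J K m : ℝ) :
    HasDerivAt (NKg β J K)
      (Real.sinh (β * K * m) * (β * K)
        + (2 * Real.sinh (β * K * m) ^ 1 * (Real.cosh (β * K * m) * (β * K)))
          / (2 * Real.sqrt (Real.sinh (β * K * m) ^ 2 + Real.exp (-(4 * β * J))))) m := by
  have hin := NKinner β K m
  have hcos := hin.cosh
  have hq := ((hin.sinh).pow 2).add_const (Real.exp (-(4 * β * J)))
  have hr := hq.sqrt (NKq_pos β J K m).ne'
  exact hcos.add hr

private lemma NKh_hasDeriv (β J K m : ℝ) : HasDerivAt (NKh β J K) (NKh1 β J K m) m := by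
  have hg := NKg_hasDeriv β J K m
  have hlog := (hg.log (NKg_pos β J K m).ne').const_mul (1 / β)
  have hpoly : HasDerivAt (fun x : ℝ => K / 2 * x ^ 2) (K / 2 * (2 * m ^ 1)) m :=
    (hasDerivAt_pow 2 m).const_mul (K / 2)
  have hpoly2 : HasDerivAt
      (fun x : ℝ => -(1 / β) * Real.log (2 * Real.cosh (β * J))
        + K / 2 * (1 - β * K * Real.exp (2 * β * J)) * x ^ 2)
      (K / 2 * (1 - β * K * Real.exp (2 * β * J)) * (2 * m ^ 1)) m :=
    (((hasDerivAt_pow 2 m).const_mul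
      (K / 2 * (1 - β * K * Real.exp (2 * β * J)))).const_add _)
  have := ((hpoly.sub_const J).sub hlog).sub hpoly2
  refine this.congr_deriv (Eq.symm ?_)
  have hr := (NKr_pos β J K m).ne'
  have hgne := (NKg_pos β J K m).ne'
  unfold NKh1
  field_simp

private lemma NKsqrtE (β J : ℝ) :
    Real.sqrt (Real.exp (-(4 * β * J))) = Real.exp (-(2 * β * J)) := by
  rw [show -(4 * β * J) = -(2 * β * J) + -(2 * β * J) by ring, Real.exp_add,
    Real.sqrt_mul_self (Real.exp_nonneg _)]

private lemma NKh1_hasDeriv (β J K : ℝ) (hβ : β ≠ 0) :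
    HasDerivAt (NKh1 β J K) 0 0 := by
  have hin := NKinner β K 0
  have hcos := hin.cosh
  have hq := ((hin.sinh).pow 2).add_const (Real.exp (-(4 * β * J)))
  have hr := hq.sqrt (NKq_pos β J K 0).ne'
  have h2 := (hcos.div hr (NKr_pos β J K 0).ne').const_add 1
  have hG := ((hin.sinh).const_mul (β * K)).mul h2
  have hGg := hG.div (NKg_hasDeriv β J K 0) (NKg_pos β J K 0).ne'
  have hKm : HasDerivAt (fun x : ℝ => K * x) K 0 := by
    simpa using (hasDerivAt_id 0).const_mul K
  have hlast : HasDerivAt (fun x : ℝ => 2 * (K / 2 * (1 - β * K * Real.exp (2 * β * J))) * x)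
      (2 * (K / 2 * (1 - β * K * Real.exp (2 * β * J)))) 0 := by
    simpa using (hasDerivAt_id 0).const_mul (2 * (K / 2 * (1 - β * K * Real.exp (2 * β * J))))
  have htot := (hKm.sub (hGg.const_mul (1 / β))).sub hlast
  refine htot.congr_deriv (Eq.symm ?_)
  simp only [NKg, Real.sinh_zero, Real.cosh_zero, NKsqrtE, mul_zero, zero_mul, mul_one,
    ne_eq, OfNat.ofNat_ne_zero, not_false_eq_true, zero_pow, zero_add, pow_one, one_mul,
    Pi.div_apply, Pi.pow_apply, Pi.mul_apply]
  have hxy : Real.exp (-(2 * β * J)) * Real.exp (2 * β * J) = 1 := by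
    rw [← Real.exp_add, show -(2 * β * J) + 2 * β * J = 0 by ring, Real.exp_zero]
  have hx : (0:ℝ) < Real.exp (-(2 * β * J)) := Real.exp_pos _
  have h1x : (1:ℝ) + Real.exp (-(2 * β * J)) ≠ 0 := by positivity
  generalize Real.exp (-(2 * β * J)) = a at hxy hx h1x ⊢
  generalize Real.exp (2 * β * J) = c at hxy ⊢
  field_simp
  linear_combination (-((β * K) ^ 2 * (1 + a) ^ 2)) * hxy

private lemma NKh_zero (β J K : ℝ) (hβ : β ≠ 0) : NKh β J K 0 = 0 := by
  have h2c : 2 * Real.cosh (β * J) = Real.exp (β * J) * (1 + Real.exp (-(2 * β * J))) := by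
    rw [Real.cosh_eq, mul_add, mul_one, ← Real.exp_add,
      show β * J + -(2 * β * J) = -(β * J) by ring]
    ring
  have hlog : Real.log (2 * Real.cosh (β * J))
      = β * J + Real.log (1 + Real.exp (-(2 * β * J))) := by
    rw [h2c, Real.log_mul (Real.exp_ne_zero _) (by positivity), Real.log_exp]
  simp only [NKh, NKg, mul_zero, Real.sinh_zero, Real.cosh_zero, ne_eq, OfNat.ofNat_ne_zero,
    not_false_eq_true, zero_pow, zero_add, NKsqrtE, hlog]
  field_simp
  ring

private lemma NKh_even (β J K m : ℝ) : NKh β J K (-m) = NKh β J K m := by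
  simp [NKh, NKg, mul_neg, Real.cosh_neg, Real.sinh_neg, neg_sq]

private lemma NKh_contDiff (β J K : ℝ) : ContDiff ℝ (⊤ : ℕ∞) (NKh β J K) := by
  have hin : ContDiff ℝ (⊤ : ℕ∞) fun m : ℝ => β * K * m := contDiff_const.mul contDiff_id
  have hg : ContDiff ℝ (⊤ : ℕ∞) (NKg β J K) := by
    refine (Real.contDiff_cosh.comp hin).add ?_
    exact (((Real.contDiff_sinh.comp hin).pow 2).add contDiff_const).sqrt
      fun m => (NKq_pos β J K m).ne'
  refine ContDiff.sub ?_ ?_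
  · refine ContDiff.sub (ContDiff.sub ?_ contDiff_const) ?_
    · exact contDiff_const.mul (contDiff_id.pow 2)
    · exact contDiff_const.mul (hg.log fun m => (NKg_pos β J K m).ne')
  · exact contDiff_const.add (contDiff_const.mul (contDiff_id.pow 2))

/-- Taylor expansion of the zero-field free energy of the Nagle-Kardar model around `m = 0`:
`F(m) = -(1/β) log(2 cosh(βJ)) + (K/2)(1 - βK e^{2βJ}) m² + O(m⁴)`. -/
theorem stmt11 (β J K : ℝ) (hβ : 0 < β) :
    (fun m : ℝ =>
        (K / 2 * m ^ 2 - J - (1 / β) * Real.log (Real.cosh (β * K * m)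
            + Real.sqrt (Real.sinh (β * K * m) ^ 2 + Real.exp (-(4 * β * J)))))
        - (-(1 / β) * Real.log (2 * Real.cosh (β * J))
            + K / 2 * (1 - β * K * Real.exp (2 * β * J)) * m ^ 2))
      =O[nhds 0] fun m : ℝ => m ^ 4 := by
  have hβ' : β ≠ 0 := ne_of_gt hβ
  have hmain : NKh β J K =O[nhds 0] fun m : ℝ => m ^ 4 := by
    refine bigO_of_iteratedDeriv_zero 4 _ (NKh_contDiff β J K) ?_
    have hodd : ∀ k, Odd k → iteratedDeriv k (NKh β J K) 0 = 0 := by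
      intro k hk
      have h1 : (fun x : ℝ => NKh β J K (-x)) = NKh β J K := funext fun x => NKh_even β J K x
      have h2 := iteratedDeriv_comp_neg k (NKh β J K) 0
      rw [h1, neg_zero, hk.neg_one_pow] at h2
      have h3 : iteratedDeriv k (NKh β J K) 0 = -iteratedDeriv k (NKh β J K) 0 := by
        simpa using h2
      linarith
    intro k hk
    interval_cases k
    · simpa [iteratedDeriv_zero] using NKh_zero β J K hβ'
    · exact hodd 1 ⟨0, by norm_num⟩
    · have hd1 : deriv (NKh β J K) = NKh1 β J K :=
        funext fun m => (NKh_hasDeriv β J K m).deriv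
      rw [show (2:ℕ) = 1 + 1 from rfl, iteratedDeriv_succ, iteratedDeriv_one, hd1]
      exact (NKh1_hasDeriv β J K hβ').deriv
    · exact hodd 3 ⟨1, by norm_num⟩
  exact hmain
end

section
/- The quadratic and quartic Taylor coefficients (at m=0) of the zero-field free energy F(m) = (K/2)m² - J - (1/β)log[cosh(βKm) + sqrt(sinh²(βKm) + e^{-4βJ})] vanish simultaneously if and only if βJ = -log(3)/4 and βK = √3. -/
/-!
Write `x = βJ` and `y = βK`. Since `K ≠ 0`, the quadratic coefficient vanishes iff
`y e^{2x} = 1`, which forces `β ≠ 0`; the quartic coefficient then vanishes iff `3 e^{4x} = 1`,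
i.e. `x = -log 3 / 4`. As `e^{4x} = (e^{2x})²`, the two conditions together give `y² = 3`
with `y > 0`.
-/

open Real

lemma three_mul_exp_four_mul_eq_one_iff {x : ℝ} : 3 * exp (4 * x) = 1 ↔ x = -log 3 / 4 := by
  have hexp : exp (-log 3) = 3⁻¹ := by rw [exp_neg, exp_log three_pos]
  constructor
  · intro h
    have : exp (4 * x) = exp (-log 3) := by rw [hexp]; linarith
    linarith [exp_injective this]
  · rintro rfl
    rw [show 4 * (-log 3 / 4) = -log 3 by ring, hexp]
    norm_num

lemma mul_exp_two_mul_eq_one_and_three_mul_exp_four_mul_eq_one_iff {x y : ℝ} :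
    y * exp (2 * x) = 1 ∧ 3 * exp (4 * x) = 1 ↔ x = -log 3 / 4 ∧ y = √3 := by
  have hsq : exp (4 * x) = exp (2 * x) ^ 2 := by rw [← exp_nat_mul]; ring_nf
  rw [← three_mul_exp_four_mul_eq_one_iff]
  constructor
  · rintro ⟨hy, h4⟩
    refine ⟨h4, ?_⟩
    have hy_pos : 0 < y := pos_of_mul_pos_left (hy ▸ one_pos) (exp_pos _).le
    have hy_sq : y ^ 2 = 3 := by
      linear_combination (3 * (y * exp (2 * x) + 1)) * hy - y ^ 2 * h4 + 3 * y ^ 2 * hsq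
    rw [← hy_sq, sqrt_sq hy_pos.le]
  · rintro ⟨h4, rfl⟩
    refine ⟨?_, h4⟩
    have hprod_sq : (√3 * exp (2 * x)) ^ 2 = 1 := by
      rw [mul_pow, sq_sqrt zero_le_three, ← hsq, h4]
    exact (pow_eq_one_iff_of_nonneg (by positivity) two_ne_zero).mp hprod_sq

theorem stmt12_general (β J K : ℝ) (hK : K ≠ 0) :
    (K / 2 * (1 - β * K * Real.exp (2 * β * J)) = 0 ∧
      β ^ 3 * K ^ 4 * (3 * Real.exp (4 * β * J) - 1) / (24 * Real.exp (-(2 * β * J))) = 0)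
    ↔ (β * J = -Real.log 3 / 4 ∧ β * K = Real.sqrt 3) := by
  rw [mul_assoc 2, mul_assoc 4, ← mul_exp_two_mul_eq_one_and_three_mul_exp_four_mul_eq_one_iff]
  have hquadratic :
      K / 2 * (1 - β * K * exp (2 * (β * J))) = 0 ↔ β * K * exp (2 * (β * J)) = 1 := by
    rw [mul_eq_zero, sub_eq_zero, eq_comm (a := 1)]
    simp [hK]
  rw [hquadratic]
  refine and_congr_right fun h => ?_
  have hβ : β ≠ 0 := by rintro rfl; simp at h
  simp [hβ, hK, exp_ne_zero, sub_eq_zero]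

/-- The quadratic and quartic coefficients of the zero-field free energy vanish
simultaneously iff `βJ = -log 3 / 4` and `βK = √3` (tricritical point). -/
theorem stmt12 (β J K : ℝ) (hβ : 0 < β) (hK : K ≠ 0) :
    (K / 2 * (1 - β * K * Real.exp (2 * β * J)) = 0 ∧
      β ^ 3 * K ^ 4 * (3 * Real.exp (4 * β * J) - 1) / (24 * Real.exp (-(2 * β * J))) = 0)
    ↔ (β * J = -Real.log 3 / 4 ∧ β * K = Real.sqrt 3) :=
  stmt12_general β J K hK
end

section
/- The large deviation rate function U(m,s) = s log s - ((1+m)/2) log(1+m) - ((1-m)/2) log(1-m) + ((1+m-s)/2) log(1+m-s) + ((1-m-s)/2) log(1-m-s) - β(K m²/2 + h m + J(1-2s) + f) satisfies ∂U/∂s = 0 at s = s*(m) := (1 - sqrt(m² + e^{4βJ}(1-m²)))/(1 - e^{4βJ}) for any m ∈ (-1,1), provided e^{4βJ} ≠ 1. -/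
set_option maxHeartbeats 1000000 in
/-- The rate function `U(m,·)` has a critical point in `s` at
`s*(m) = (1 - sqrt(m² + e^{4βJ}(1-m²)))/(1 - e^{4βJ})`. -/
theorem stmt18 (β J K h f m : ℝ) (hβ : 0 < β) (hm : m ∈ Set.Ioo (-1 : ℝ) 1)
    (ha : Real.exp (4 * β * J) ≠ 1) :
    deriv (fun s : ℝ =>
        s * Real.log s - (1 + m) / 2 * Real.log (1 + m) - (1 - m) / 2 * Real.log (1 - m)
          + (1 + m - s) / 2 * Real.log (1 + m - s) + (1 - m - s) / 2 * Real.log (1 - m - s)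
          - β * (K * m ^ 2 / 2 + h * m + J * (1 - 2 * s) + f))
      ((1 - Real.sqrt (m ^ 2 + Real.exp (4 * β * J) * (1 - m ^ 2)))
        / (1 - Real.exp (4 * β * J))) = 0 := by
  obtain ⟨hm1, hm2⟩ := hm
  set a : ℝ := Real.exp (4 * β * J) with ha_def
  have hA : 0 < a := Real.exp_pos _
  have hm2' : m ^ 2 < 1 := by nlinarith
  have ha' : 1 - a ≠ 0 := fun hc => ha (by linarith [sub_eq_zero.mp hc])
  set D : ℝ := Real.sqrt (m ^ 2 + a * (1 - m ^ 2)) with hD_def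
  have hDnn : 0 ≤ D := Real.sqrt_nonneg _
  have hD2 : D ^ 2 = m ^ 2 + a * (1 - m ^ 2) := by
    rw [hD_def, Real.sq_sqrt]; nlinarith [sq_nonneg m]
  set s : ℝ := (1 - D) / (1 - a) with hs_def
  -- key quadratic identity : a * s^2 = (1-s)^2 - m^2
  have hseq : s * (1 - a) = 1 - D := by
    rw [hs_def, div_mul_cancel₀ _ ha']
  have hquad : a * s ^ 2 = (1 - s) ^ 2 - m ^ 2 := by
    have h0 : (1 - a) * ((1 - a) * s ^ 2 - 2 * s + 1 - m ^ 2) = 0 := by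
      have : ((1 - a) * s) ^ 2 = (1 - D) ^ 2 := by rw [mul_comm, hseq]
      nlinarith [hD2]
    have := mul_eq_zero.mp h0
    rcases this with h | h
    · exact absurd h ha'
    · nlinarith
  -- positivity of s
  have hs0 : 0 < s := by
    rcases lt_or_gt_of_ne ha' with hlt | hgt
    · -- 1 - a < 0, so a > 1, D > 1
      have hD1 : 1 < D ^ 2 := by nlinarith
      have : 1 < D := by nlinarith
      rw [hs_def]; exact div_pos_of_neg_of_neg (by linarith) hlt
    · have hD1 : D ^ 2 < 1 := by nlinarith
      have : D < 1 := by nlinarith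
      rw [hs_def]; exact div_pos (by linarith) hgt
  -- 1 - s > |m|
  have hkey : (1 - s) * (1 - a) = D - a := by linear_combination -hseq
  have h1s : 0 < 1 - s := by
    rcases lt_or_gt_of_ne ha' with hlt | hgt
    · -- a > 1 : D < a since a^2 - D^2 = (a-1)(a+m^2) > 0
      have hDa : D < a := by nlinarith [hD2, hDnn, hA.le, sq_nonneg m]
      nlinarith [hkey]
    · have hDa : a < D := by nlinarith [hD2, hDnn, hA.le, sq_nonneg m]
      nlinarith [hkey]
  have hsm : m ^ 2 < (1 - s) ^ 2 := by
    nlinarith [hquad, mul_pos hA (mul_pos hs0 hs0)]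
  have hp : 0 < 1 + m - s := by nlinarith
  have hq : 0 < 1 - m - s := by nlinarith
  -- rewrite the function in a convenient form
  have hfun : (fun x : ℝ =>
        x * Real.log x - (1 + m) / 2 * Real.log (1 + m) - (1 - m) / 2 * Real.log (1 - m)
          + (1 + m - x) / 2 * Real.log (1 + m - x) + (1 - m - x) / 2 * Real.log (1 - m - x)
          - β * (K * m ^ 2 / 2 + h * m + J * (1 - 2 * x) + f))
      = (fun x : ℝ =>
        x * Real.log x + ((1 + m - x) * Real.log (1 + m - x)) / 2
          + ((1 - m - x) * Real.log (1 - m - x)) / 2 + (2 * β * J) * x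
          + (-( (1 + m) / 2 * Real.log (1 + m)) - (1 - m) / 2 * Real.log (1 - m)
             - β * (K * m ^ 2 / 2 + h * m + J + f))) := by
    funext x; ring
  rw [hfun]
  have h1 : HasDerivAt (fun x : ℝ => x * Real.log x) (Real.log s + 1) s :=
    Real.hasDerivAt_mul_log hs0.ne'
  have hin1 : HasDerivAt (fun x : ℝ => 1 + m - x) (-1) s := by
    simpa using (hasDerivAt_id s).const_sub (1 + m)
  have hin2 : HasDerivAt (fun x : ℝ => 1 - m - x) (-1) s := by
    simpa using (hasDerivAt_id s).const_sub (1 - m)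
  have h3 : HasDerivAt (fun x : ℝ => ((1 + m - x) * Real.log (1 + m - x)) / 2)
      (((Real.log (1 + m - s) + 1) * (-1)) / 2) s := by
    exact ((Real.hasDerivAt_mul_log hp.ne').comp s hin1).div_const 2
  have h4 : HasDerivAt (fun x : ℝ => ((1 - m - x) * Real.log (1 - m - x)) / 2)
      (((Real.log (1 - m - s) + 1) * (-1)) / 2) s := by
    exact ((Real.hasDerivAt_mul_log hq.ne').comp s hin2).div_const 2
  have h5 : HasDerivAt (fun x : ℝ => (2 * β * J) * x) (2 * β * J) s := by
    simpa using (hasDerivAt_id s).const_mul (2 * β * J)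
  have hG := ((((h1.add h3).add h4).add h5).add_const
      (-( (1 + m) / 2 * Real.log (1 + m)) - (1 - m) / 2 * Real.log (1 - m)
             - β * (K * m ^ 2 / 2 + h * m + J + f)))
  refine hG.deriv.trans ?_
  -- log identity
  have hlog : Real.log (1 + m - s) + Real.log (1 - m - s) = 4 * β * J + 2 * Real.log s := by
    rw [← Real.log_mul hp.ne' hq.ne']
    have hpq : (1 + m - s) * (1 - m - s) = a * s ^ 2 := by nlinarith
    rw [hpq, Real.log_mul hA.ne' (by positivity), ha_def, Real.log_exp,
      Real.log_pow]
    push_cast; ring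
  linarith [hlog]
end

section
/- For m ∈ (-1,1) and a > 0, a ≠ 1, the unique solution s ∈ (0, 1-|m|) of the quadratic equation s² = a⁻¹(1+m-s)(1-m-s) is s = (1 - sqrt(m² + a(1-m²)))/(1-a). -/
/-- For `m ∈ (-1,1)` and `a > 0`, `a ≠ 1`, the unique solution `s ∈ (0, 1-|m|)` of
`s² = a⁻¹ (1+m-s)(1-m-s)` is `s = (1 - sqrt(m² + a(1-m²)))/(1-a)`. -/
theorem stmt19 (m a : ℝ) (hm : m ∈ Set.Ioo (-1 : ℝ) 1) (ha : 0 < a) (ha' : a ≠ 1) :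
    (1 - Real.sqrt (m ^ 2 + a * (1 - m ^ 2))) / (1 - a) ∈ Set.Ioo 0 (1 - |m|) ∧
    ((1 - Real.sqrt (m ^ 2 + a * (1 - m ^ 2))) / (1 - a)) ^ 2
      = a⁻¹ * (1 + m - (1 - Real.sqrt (m ^ 2 + a * (1 - m ^ 2))) / (1 - a))
          * (1 - m - (1 - Real.sqrt (m ^ 2 + a * (1 - m ^ 2))) / (1 - a)) ∧
    ∀ s ∈ Set.Ioo (0 : ℝ) (1 - |m|),
      s ^ 2 = a⁻¹ * (1 + m - s) * (1 - m - s) →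
        s = (1 - Real.sqrt (m ^ 2 + a * (1 - m ^ 2))) / (1 - a) := by
  obtain ⟨hm1, hm2⟩ := hm
  set r := Real.sqrt (m ^ 2 + a * (1 - m ^ 2)) with hrdef
  have hm2' : m ^ 2 < 1 := by nlinarith
  have hDpos : 0 < m ^ 2 + a * (1 - m ^ 2) := by nlinarith
  have hr0 : 0 ≤ r := Real.sqrt_nonneg _
  have hr2 : r ^ 2 = m ^ 2 + a * (1 - m ^ 2) := Real.sq_sqrt hDpos.le
  have ht0 : 0 ≤ |m| := abs_nonneg m
  have ht1 : |m| < 1 := abs_lt.mpr ⟨hm1, hm2⟩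
  have htsq : |m| ^ 2 = m ^ 2 := sq_abs m
  have h1a : (1 : ℝ) - a ≠ 0 := by
    intro h; exact ha' (by linarith)
  have ha0 : a ≠ 0 := ha.ne'
  -- membership in the interval
  have hmem : (1 - r) / (1 - a) ∈ Set.Ioo 0 (1 - |m|) := by
    rcases lt_or_gt_of_ne ha' with hlt | hgt
    · -- a < 1, so r < 1
      have hrlt : r < 1 := by nlinarith
      have hB2 : (a * (1 - |m|) + |m|) ^ 2 < r ^ 2 := by
        nlinarith [mul_pos (mul_pos ha (show (0:ℝ) < 1 - a by linarith))
          (pow_pos (show (0:ℝ) < 1 - |m| by linarith) 2)]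
      have hB : a * (1 - |m|) + |m| < r :=
        lt_of_pow_lt_pow_left₀ 2 hr0 hB2
      constructor
      · exact div_pos (by linarith) (by linarith)
      · rw [div_lt_iff₀ (by linarith : (0:ℝ) < 1 - a)]
        nlinarith
    · -- a > 1, so r > 1
      have hrgt : 1 < r := by nlinarith
      have hB2 : r ^ 2 < (a * (1 - |m|) + |m|) ^ 2 := by
        nlinarith [mul_pos (mul_pos ha (show (0:ℝ) < a - 1 by linarith))
          (pow_pos (show (0:ℝ) < 1 - |m| by linarith) 2)]
      have hB : r < a * (1 - |m|) + |m| :=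
        lt_of_pow_lt_pow_left₀ 2 (by nlinarith [mul_pos ha (show (0:ℝ) < 1 - |m| by linarith)]) hB2
      constructor
      · rw [div_pos_iff]
        right; constructor <;> linarith
      · rw [div_lt_iff_of_neg (by linarith : (1:ℝ) - a < 0)]
        nlinarith
  refine ⟨hmem, ?_, ?_⟩
  · -- the quadratic equation
    field_simp
    linear_combination (a - 1) * hr2
  · -- uniqueness
    rintro s ⟨hs0, hs1⟩ heq
    have key : ((1 - a) * s - 1) ^ 2 = r ^ 2 := by
      have h : a * s ^ 2 = (1 + m - s) * (1 - m - s) := by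
        field_simp at heq
        linarith [heq]
      linear_combination (a - 1) * h - hr2
    have habs : (1 - a) * s - 1 = r ∨ (1 - a) * s - 1 = -r := by
      have h' : |(1 - a) * s - 1| = r := by
        rw [← Real.sqrt_sq_eq_abs, key, Real.sqrt_sq hr0]
      exact (abs_eq hr0).mp h'
    rcases habs with h | h
    · exfalso
      have has : 0 < a * s := mul_pos ha hs0
      nlinarith
    · rw [eq_div_iff h1a]
      linarith
end
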